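/- Let (u_k) ⊂ H^{1/2,2}(𝕊¹,ℂ) be such that u_k → u a.e. on 𝕊¹ for some u ∈ H^{1/2,2}(𝕊¹,𝕊¹). If u_k → u in H^{1/2,2}(𝕊¹,ℂ) (i.e. ‖u_k − u‖_{L²(𝕊¹)} → 0 and [u_k − u]_{H^{1/2,2}(𝕊¹)} → 0) and there exists δ > 0 independent of k with |u_k| ≥ δ a.e. on 𝕊¹, then u_k/|u_k| → u in H^{1/2,2}(𝕊¹,ℂ). -/

import Mathlib

open MeasureTheory Real Filter

/-- Squared Gagliardo H^{1/2,2} seminorm on the circle, for circle maps represented by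
functions on (0, 2π]:
[u]² = ∫₀^{2π}∫₀^{2π} |u(θ) − u(t)|²/|e^{iθ} − e^{it}|² dt dθ. -/
noncomputable def gagCircSq (u : ℝ → ℂ) : ENNReal :=
  ∫⁻ p in (Set.Ioc (0 : ℝ) (2 * π)) ×ˢ (Set.Ioc (0 : ℝ) (2 * π)),
    ENNReal.ofReal (‖u p.1 - u p.2‖ ^ 2 /
      ‖Complex.exp ((p.1 : ℂ) * Complex.I) - Complex.exp ((p.2 : ℂ) * Complex.I)‖ ^ 2)

/-- Membership in H^{1/2,2}(𝕊¹,ℂ): L² on the circle with finite Gagliardo seminorm. -/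
def MemH12C (u : ℝ → ℂ) : Prop :=
  MemLp u 2 (volume.restrict (Set.Ioc (0 : ℝ) (2 * π))) ∧ gagCircSq u < ⊤

private lemma norm_coe_norm (a : ℂ) : ‖((‖a‖ : ℝ) : ℂ)‖ = ‖a‖ := by
  rw [Complex.norm_real, norm_norm]

private lemma norm_normalize_sub_of_norm_one {a b : ℂ} (ha : a ≠ 0) (hb : ‖b‖ = 1) :
    ‖a / (‖a‖ : ℂ) - b‖ ≤ 2 * ‖a - b‖ := by
  have hα : (0:ℝ) < ‖a‖ := norm_pos_iff.mpr ha
  have hαC : ((‖a‖ : ℝ) : ℂ) ≠ 0 := Complex.ofReal_ne_zero.mpr hα.ne'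
  have hu : ‖a / (‖a‖ : ℂ)‖ = 1 := by
    rw [norm_div, norm_coe_norm, div_self hα.ne']
  have he : a / (‖a‖ : ℂ) - a = (1 - ((‖a‖ : ℝ) : ℂ)) * (a / (‖a‖ : ℂ)) := by
    rw [sub_mul, one_mul, mul_div_assoc', mul_div_cancel_left₀ a hαC]
  have h1 : ‖a / (‖a‖ : ℂ) - a‖ = |1 - ‖a‖| := by
    rw [he, norm_mul, hu, mul_one,
      show (1 - ((‖a‖ : ℝ) : ℂ)) = (((1 - ‖a‖ : ℝ)) : ℂ) by push_cast; ring,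
      Complex.norm_real, Real.norm_eq_abs]
  have tri : ‖a / (‖a‖ : ℂ) - b‖ ≤ ‖a / (‖a‖ : ℂ) - a‖ + ‖a - b‖ := by
    have he2 : a / (‖a‖ : ℂ) - b = (a / (‖a‖ : ℂ) - a) + (a - b) := by ring
    rw [he2]; exact norm_add_le _ _
  have h2 : |1 - ‖a‖| ≤ ‖a - b‖ := by
    have h3 := abs_norm_sub_norm_le b a
    rw [norm_sub_rev b a, hb] at h3
    exact h3
  calc ‖a / (‖a‖ : ℂ) - b‖ ≤ |1 - ‖a‖| + ‖a - b‖ := by rw [← h1]; exact tri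
    _ ≤ ‖a - b‖ + ‖a - b‖ := by linarith
    _ = 2 * ‖a - b‖ := by ring

private lemma norm_normalize_sub_normalize {δ : ℝ} (hδ : 0 < δ) {a b : ℂ}
    (ha : δ ≤ ‖a‖) (hb : δ ≤ ‖b‖) :
    ‖a / (‖a‖ : ℂ) - b / (‖b‖ : ℂ)‖ ≤ 2 / δ * ‖a - b‖ := by
  have hα : (0:ℝ) < ‖a‖ := lt_of_lt_of_le hδ ha
  have hβ : (0:ℝ) < ‖b‖ := lt_of_lt_of_le hδ hb
  have hA : ‖a‖ ≠ 0 := hα.ne'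
  have hB : ‖b‖ ≠ 0 := hβ.ne'
  have hαC : ((‖a‖ : ℝ) : ℂ) ≠ 0 := Complex.ofReal_ne_zero.mpr hA
  have hβC : ((‖b‖ : ℝ) : ℂ) ≠ 0 := Complex.ofReal_ne_zero.mpr hB
  have key : a / (‖a‖:ℂ) - b / (‖b‖:ℂ)
      = (a - b) / (‖a‖:ℂ) + b * ((‖a‖:ℂ)⁻¹ - (‖b‖:ℂ)⁻¹) := by
    field_simp
    ring
  have h1 : ‖(a - b) / (‖a‖:ℂ)‖ ≤ ‖a - b‖ / δ := by
    rw [norm_div, norm_coe_norm]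
    gcongr
  have h2 : ‖b * ((‖a‖:ℂ)⁻¹ - (‖b‖:ℂ)⁻¹)‖ ≤ ‖a - b‖ / δ := by
    have hinv : ((‖a‖:ℂ)⁻¹ - (‖b‖:ℂ)⁻¹) = (((‖a‖⁻¹ - ‖b‖⁻¹ : ℝ)) : ℂ) := by
      push_cast; ring
    rw [norm_mul, hinv, Complex.norm_real, Real.norm_eq_abs]
    have heq : ‖a‖⁻¹ - ‖b‖⁻¹ = (‖b‖ - ‖a‖) / (‖a‖ * ‖b‖) := by
      rw [inv_eq_one_div, inv_eq_one_div, div_sub_div _ _ hA hB, one_mul, mul_one]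
    rw [heq, abs_div, abs_of_pos (mul_pos hα hβ)]
    have h3 : ‖b‖ * (|‖b‖ - ‖a‖| / (‖a‖ * ‖b‖)) = |‖b‖ - ‖a‖| / ‖a‖ := by
      rw [mul_comm (‖a‖) (‖b‖), ← div_div, mul_div_assoc', mul_div_assoc',
        mul_div_cancel_left₀ _ hB]
    rw [h3]
    have h4 : |‖b‖ - ‖a‖| ≤ ‖a - b‖ := by
      have h5 := abs_norm_sub_norm_le b a
      rwa [norm_sub_rev b a] at h5
    gcongr
  calc ‖a / (‖a‖:ℂ) - b / (‖b‖:ℂ)‖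
      ≤ ‖(a - b) / (‖a‖:ℂ)‖ + ‖b * ((‖a‖:ℂ)⁻¹ - (‖b‖:ℂ)⁻¹)‖ := by
        rw [key]; exact norm_add_le _ _
    _ ≤ ‖a - b‖ / δ + ‖a - b‖ / δ := add_le_add h1 h2
    _ = 2 / δ * ‖a - b‖ := by ring

/-- Generalized dominated convergence for lower integrals, zero-limit version. -/
private lemma gdct {α : Type*} [MeasurableSpace α] {μ : Measure α} {h g : ℕ → α → ENNReal}
    {G : α → ENNReal}
    (hgm : ∀ n, AEMeasurable (g n) μ) (hhm : ∀ n, AEMeasurable (h n) μ)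
    (hle : ∀ n, ∀ᵐ x ∂μ, h n x ≤ g n x)
    (hh0 : ∀ᵐ x ∂μ, Tendsto (fun n => h n x) atTop (nhds 0))
    (hgG : ∀ᵐ x ∂μ, Tendsto (fun n => g n x) atTop (nhds (G x)))
    (hGfin : ∫⁻ x, G x ∂μ ≠ ⊤)
    (hgi : Tendsto (fun n => ∫⁻ x, g n x ∂μ) atTop (nhds (∫⁻ x, G x ∂μ))) :
    Tendsto (fun n => ∫⁻ x, h n x ∂μ) atTop (nhds 0) := by
  set L := ∫⁻ x, G x ∂μ with hL
  have fatou : L ≤ liminf (fun n => ∫⁻ x, (g n x - h n x) ∂μ) atTop := by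
    have hGeq : ∀ᵐ x ∂μ, G x = liminf (fun n => g n x - h n x) atTop := by
      filter_upwards [hh0, hgG] with x h1 h2
      have ht : Tendsto (fun n => g n x - h n x) atTop (nhds (G x - 0)) :=
        ENNReal.Tendsto.sub h2 h1 (Or.inr (by simp))
      rw [tsub_zero] at ht
      exact ht.liminf_eq.symm
    calc L = ∫⁻ x, liminf (fun n => g n x - h n x) atTop ∂μ := lintegral_congr_ae hGeq
      _ ≤ liminf (fun n => ∫⁻ x, (g n x - h n x) ∂μ) atTop :=
          lintegral_liminf_le' (fun n => (hgm n).sub (hhm n))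
  rw [ENNReal.tendsto_nhds_zero]
  intro ε hε
  set ε' := min (ε / 2) 1 with hε'def
  have hε'pos : 0 < ε' := lt_min (ENNReal.half_pos hε.ne') one_pos
  have hε'top : ε' ≠ ⊤ := ((min_le_right _ _).trans_lt (by norm_num)).ne
  have hε'ε : ε' + ε' ≤ ε := by
    calc ε' + ε' ≤ ε / 2 + ε / 2 := add_le_add (min_le_left _ _) (min_le_left _ _)
      _ = ε := ENNReal.add_halves ε
  have ev1 : ∀ᶠ n in atTop, ∫⁻ x, g n x ∂μ < L + ε' :=
    hgi.eventually_lt_const (ENNReal.lt_add_right hGfin hε'pos.ne')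
  have ev2 : ∀ᶠ n in atTop, L - ε' ≤ ∫⁻ x, (g n x - h n x) ∂μ := by
    rcases le_or_gt L ε' with hc | hc
    · exact Eventually.of_forall fun n => by simp [tsub_eq_zero_of_le hc]
    · have hlt : L - ε' < liminf (fun n => ∫⁻ x, (g n x - h n x) ∂μ) atTop :=
        lt_of_lt_of_le (ENNReal.sub_lt_self hGfin (hε'pos.trans hc).ne' hε'pos.ne') fatou
      exact (eventually_lt_of_lt_liminf hlt).mono fun n hn => hn.le
  filter_upwards [ev1, ev2] with n h1 h2
  have heq : ∫⁻ x, g n x ∂μ = ∫⁻ x, (g n x - h n x) ∂μ + ∫⁻ x, h n x ∂μ := by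
    rw [← lintegral_add_right' _ (hhm n)]
    apply lintegral_congr_ae
    filter_upwards [hle n] with x hx
    exact (tsub_add_cancel_of_le hx).symm
  rw [heq] at h1
  refine le_trans ?_ hε'ε
  rcases le_total L ε' with hc | hc
  · calc ∫⁻ x, h n x ∂μ ≤ ∫⁻ x, (g n x - h n x) ∂μ + ∫⁻ x, h n x ∂μ := le_add_self
      _ ≤ L + ε' := h1.le
      _ ≤ ε' + ε' := add_le_add hc le_rfl
  · have hBfin : L - ε' ≠ ⊤ := ((tsub_le_self).trans_lt hGfin.lt_top).ne
    have hsum : (L - ε') + ∫⁻ x, h n x ∂μ ≤ (L - ε') + (ε' + ε') := by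
      have hR : (L - ε') + (ε' + ε') = L + ε' := by
        rw [← add_assoc, tsub_add_cancel_of_le hc]
      rw [hR]
      exact le_trans (add_le_add h2 le_rfl) h1.le
    exact (ENNReal.add_le_add_iff_left hBfin).mp hsum

/-- if u_k → u a.e., u_k → u in H^{1/2,2}(𝕊¹,ℂ) (L² and Gagliardo seminorm),
|u| = 1 a.e., and |u_k| ≥ δ > 0 a.e. uniformly in k, then u_k/|u_k| → u in H^{1/2,2}(𝕊¹,ℂ). -/
theorem normalized_convergence (u : ℕ → ℝ → ℂ) (w : ℝ → ℂ) (δ : ℝ) (hδ : 0 < δ)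
    (humem : ∀ n, MemH12C (u n))
    (hwmem : MemH12C w)
    (hwcirc : ∀ᵐ θ ∂(volume.restrict (Set.Ioc (0 : ℝ) (2 * π))), ‖w θ‖ = 1)
    (hae : ∀ᵐ θ ∂(volume.restrict (Set.Ioc (0 : ℝ) (2 * π))),
      Tendsto (fun n => u n θ) atTop (nhds (w θ)))
    (hL2 : Tendsto (fun n => ∫ θ in (0 : ℝ)..(2 * π), ‖u n θ - w θ‖ ^ 2) atTop (nhds 0))
    (hGag : Tendsto (fun n => gagCircSq (fun θ => u n θ - w θ)) atTop (nhds 0))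
    (hlow : ∀ n, ∀ᵐ θ ∂(volume.restrict (Set.Ioc (0 : ℝ) (2 * π))), δ ≤ ‖u n θ‖) :
    Tendsto (fun n => ∫ θ in (0 : ℝ)..(2 * π), ‖u n θ / (‖u n θ‖ : ℂ) - w θ‖ ^ 2)
        atTop (nhds 0) ∧
      Tendsto (fun n => gagCircSq (fun θ => u n θ / (‖u n θ‖ : ℂ) - w θ)) atTop (nhds 0) := by
  have h2π : (0:ℝ) ≤ 2 * π := by positivity
  set S : Set ℝ := Set.Ioc (0 : ℝ) (2 * π) with hS
  set μ : Measure ℝ := volume.restrict S with hμ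
  set v : ℕ → ℝ → ℂ := fun n θ => u n θ / (‖u n θ‖ : ℂ) with hv
  haveI hfin : IsFiniteMeasure μ := by
    constructor
    rw [hμ, Measure.restrict_apply_univ, hS, Real.volume_Ioc]
    exact ENNReal.ofReal_lt_top
  have hwae : AEMeasurable w μ := hwmem.1.aestronglyMeasurable.aemeasurable
  have huae : ∀ n, AEMeasurable (u n) μ := fun n => (humem n).1.aestronglyMeasurable.aemeasurable
  have hvae : ∀ n, AEMeasurable (v n) μ := fun n =>
    (huae n).div (Complex.measurable_ofReal.comp_aemeasurable (huae n).norm)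
  -- part 1
  have hbd : ∀ n, ∀ᵐ θ ∂μ, ‖v n θ - w θ‖ ^ 2 ≤ 4 * ‖u n θ - w θ‖ ^ 2 := by
    intro n
    filter_upwards [hwcirc, hlow n] with θ h1 h2
    have hne : u n θ ≠ 0 := by
      intro h; rw [h, norm_zero] at h2; linarith
    have hkey := norm_normalize_sub_of_norm_one hne h1
    have hnn : (0:ℝ) ≤ ‖v n θ - w θ‖ := norm_nonneg _
    nlinarith [norm_nonneg (u n θ - w θ)]
  have hInt2 : ∀ n, Integrable (fun θ => ‖u n θ - w θ‖ ^ 2) μ :=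
    fun n => ((humem n).1.sub hwmem.1).norm.integrable_sq
  have hInt1 : ∀ n, Integrable (fun θ => ‖v n θ - w θ‖ ^ 2) μ := by
    intro n
    apply Integrable.mono' (integrable_const (4:ℝ))
    · exact (((hvae n).sub hwae).norm.pow_const 2).aestronglyMeasurable
    · filter_upwards [hwcirc, hlow n] with θ h1 h2
      have hne : u n θ ≠ 0 := by
        intro h; rw [h, norm_zero] at h2; linarith
      have hb1 : ‖v n θ‖ = 1 := by
        rw [hv]
        rw [norm_div, norm_coe_norm]
        exact div_self (norm_ne_zero_iff.mpr hne)
      have hle2 : ‖v n θ - w θ‖ ≤ 2 := by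
        calc ‖v n θ - w θ‖ ≤ ‖v n θ‖ + ‖w θ‖ := norm_sub_le _ _
          _ = 2 := by rw [hb1, h1]; norm_num
      rw [Real.norm_eq_abs, abs_of_nonneg (by positivity)]
      nlinarith [norm_nonneg (v n θ - w θ)]
  have part1 : Tendsto (fun n => ∫ θ in (0 : ℝ)..(2 * π), ‖v n θ - w θ‖ ^ 2)
      atTop (nhds 0) := by
    have hub : ∀ n, ∫ θ in (0 : ℝ)..(2 * π), ‖v n θ - w θ‖ ^ 2
        ≤ 4 * ∫ θ in (0 : ℝ)..(2 * π), ‖u n θ - w θ‖ ^ 2 := by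
      intro n
      rw [intervalIntegral.integral_of_le h2π, intervalIntegral.integral_of_le h2π,
        ← integral_const_mul]
      exact integral_mono_ae (hInt1 n) ((hInt2 n).const_mul 4) (hbd n)
    have hlb : ∀ n, 0 ≤ ∫ θ in (0 : ℝ)..(2 * π), ‖v n θ - w θ‖ ^ 2 :=
      fun n => intervalIntegral.integral_nonneg h2π (fun θ _ => by positivity)
    have h4 : Tendsto (fun n => 4 * ∫ θ in (0 : ℝ)..(2 * π), ‖u n θ - w θ‖ ^ 2)
        atTop (nhds 0) := by
      have := hL2.const_mul (4:ℝ)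
      simpa using this
    exact squeeze_zero hlb hub h4
  refine ⟨part1, ?_⟩
  -- part 2
  set ρ : Measure (ℝ × ℝ) := μ.prod μ with hρ
  set den : ℝ × ℝ → ℝ := fun p =>
    ‖Complex.exp ((p.1 : ℂ) * Complex.I) - Complex.exp ((p.2 : ℂ) * Complex.I)‖ ^ 2 with hden
  have hgagEq : ∀ ψ : ℝ → ℂ, gagCircSq ψ
      = ∫⁻ p, ENNReal.ofReal (‖ψ p.1 - ψ p.2‖ ^ 2 / den p) ∂ρ := by
    intro ψ
    rw [gagCircSq]
    congr 1
    rw [hρ, hμ, Measure.prod_restrict, ← Measure.volume_eq_prod]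
  have hdenm : Measurable den := by
    apply Measurable.pow_const
    apply Measurable.norm
    fun_prop
  have hfst : Measure.QuasiMeasurePreserving (Prod.fst : ℝ × ℝ → ℝ) ρ μ :=
    Measure.quasiMeasurePreserving_fst
  have hsnd : Measure.QuasiMeasurePreserving (Prod.snd : ℝ × ℝ → ℝ) ρ μ :=
    Measure.quasiMeasurePreserving_snd
  have comp1 : ∀ {φ : ℝ → ℂ}, AEMeasurable φ μ → AEMeasurable (fun p : ℝ × ℝ => φ p.1) ρ :=
    fun h => h.comp_quasiMeasurePreserving hfst
  have comp2 : ∀ {φ : ℝ → ℂ}, AEMeasurable φ μ → AEMeasurable (fun p : ℝ × ℝ => φ p.2) ρ :=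
    fun h => h.comp_quasiMeasurePreserving hsnd
  set c1 : ℝ := 2 * (2 / δ) ^ 2 with hc1
  set c2 : ℝ := 2 * (2 / δ + 1) ^ 2 with hc2
  have hc1nn : 0 ≤ c1 := by positivity
  have hc2nn : 0 ≤ c2 := by positivity
  set h : ℕ → ℝ × ℝ → ENNReal := fun n p =>
    ENNReal.ofReal (‖(v n p.1 - w p.1) - (v n p.2 - w p.2)‖ ^ 2 / den p) with hh
  set g : ℕ → ℝ × ℝ → ENNReal := fun n p =>
    ENNReal.ofReal (c1 * (‖(u n p.1 - w p.1) - (u n p.2 - w p.2)‖ ^ 2 / den p))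
      + ENNReal.ofReal (c2 * (‖w p.1 - w p.2‖ ^ 2 / den p)) with hg
  set G : ℝ × ℝ → ENNReal := fun p => ENNReal.ofReal (c2 * (‖w p.1 - w p.2‖ ^ 2 / den p))
    with hG
  have hhm : ∀ n, AEMeasurable (h n) ρ := by
    intro n
    apply ENNReal.measurable_ofReal.comp_aemeasurable
    exact ((((comp1 (hvae n)).sub (comp1 hwae)).sub
      ((comp2 (hvae n)).sub (comp2 hwae))).norm.pow_const 2).div hdenm.aemeasurable
  have hFm : ∀ n, AEMeasurable (fun p : ℝ × ℝ =>
      ENNReal.ofReal (c1 * (‖(u n p.1 - w p.1) - (u n p.2 - w p.2)‖ ^ 2 / den p))) ρ := by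
    intro n
    apply ENNReal.measurable_ofReal.comp_aemeasurable
    exact (aemeasurable_const.mul (((((comp1 (huae n)).sub (comp1 hwae)).sub
      ((comp2 (huae n)).sub (comp2 hwae))).norm.pow_const 2).div hdenm.aemeasurable))
  have hGm : AEMeasurable G ρ := by
    apply ENNReal.measurable_ofReal.comp_aemeasurable
    exact aemeasurable_const.mul
      ((((comp1 hwae).sub (comp2 hwae)).norm.pow_const 2).div hdenm.aemeasurable)
  have hgm : ∀ n, AEMeasurable (g n) ρ := fun n => (hFm n).add hGm
  -- pointwise domination
  have hle : ∀ n, ∀ᵐ p ∂ρ, h n p ≤ g n p := by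
    intro n
    filter_upwards [hfst.ae (hlow n), hsnd.ae (hlow n)] with p h1 h2
    simp only [hh, hg]
    have hne1 : u n p.1 ≠ 0 := by intro hz; rw [hz, norm_zero] at h1; linarith
    have hne2 : u n p.2 ≠ 0 := by intro hz; rw [hz, norm_zero] at h2; linarith
    have t1 : ‖v n p.1 - v n p.2‖ ≤ 2 / δ * ‖u n p.1 - u n p.2‖ :=
      norm_normalize_sub_normalize hδ h1 h2
    have t2 : ‖u n p.1 - u n p.2‖
        ≤ ‖(u n p.1 - w p.1) - (u n p.2 - w p.2)‖ + ‖w p.1 - w p.2‖ := by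
      have he : u n p.1 - u n p.2
          = ((u n p.1 - w p.1) - (u n p.2 - w p.2)) + (w p.1 - w p.2) := by ring
      rw [he]; exact norm_add_le _ _
    have t3 : ‖(v n p.1 - w p.1) - (v n p.2 - w p.2)‖
        ≤ ‖v n p.1 - v n p.2‖ + ‖w p.1 - w p.2‖ := by
      have he : (v n p.1 - w p.1) - (v n p.2 - w p.2)
          = (v n p.1 - v n p.2) - (w p.1 - w p.2) := by ring
      rw [he]; exact norm_sub_le _ _
    set X := ‖(v n p.1 - w p.1) - (v n p.2 - w p.2)‖ with hX
    set F := ‖(u n p.1 - w p.1) - (u n p.2 - w p.2)‖ with hF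
    set W := ‖w p.1 - w p.2‖ with hW
    have h2δ : (0:ℝ) ≤ 2 / δ := by positivity
    have t4 : X ≤ 2 / δ * F + (2 / δ + 1) * W := by nlinarith [norm_nonneg (w p.1 - w p.2)]
    have key : X ^ 2 ≤ c1 * F ^ 2 + c2 * W ^ 2 := by
      rw [hc1, hc2]
      nlinarith [sq_nonneg (2 / δ * F - (2 / δ + 1) * W), norm_nonneg
        ((v n p.1 - w p.1) - (v n p.2 - w p.2)), mul_nonneg h2δ (norm_nonneg
        ((u n p.1 - w p.1) - (u n p.2 - w p.2))),
        mul_nonneg (by positivity : (0:ℝ) ≤ 2 / δ + 1) (norm_nonneg (w p.1 - w p.2))]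
    rw [← ENNReal.ofReal_add (by positivity) (by positivity)]
    apply ENNReal.ofReal_le_ofReal
    rcases eq_or_lt_of_le (by positivity : (0:ℝ) ≤ den p) with hd | hd
    · rw [← hd]
      simp
    · have hstep : X ^ 2 / den p ≤ (c1 * F ^ 2 + c2 * W ^ 2) / den p :=
        div_le_div_of_nonneg_right key hd.le
      calc X ^ 2 / den p ≤ (c1 * F ^ 2 + c2 * W ^ 2) / den p := hstep
        _ = c1 * (F ^ 2 / den p) + c2 * (W ^ 2 / den p) := by
            rw [add_div, mul_div_assoc, mul_div_assoc]
  -- a.e. convergence of h to 0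
  have hh0 : ∀ᵐ p ∂ρ, Tendsto (fun n => h n p) atTop (nhds 0) := by
    filter_upwards [hfst.ae hae, hsnd.ae hae, hfst.ae hwcirc, hsnd.ae hwcirc]
      with p ht1 ht2 hw1 hw2
    have hvt : ∀ (θ : ℝ), Tendsto (fun n => u n θ) atTop (nhds (w θ)) → ‖w θ‖ = 1 →
        Tendsto (fun n => v n θ) atTop (nhds (w θ)) := by
      intro θ ht hw
      have hnorm : Tendsto (fun n => ((‖u n θ‖ : ℝ) : ℂ)) atTop (nhds ((‖w θ‖ : ℝ) : ℂ)) :=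
        (Complex.continuous_ofReal.tendsto _).comp ht.norm
      have hne : ((‖w θ‖ : ℝ) : ℂ) ≠ 0 := by rw [hw]; norm_num
      have hdiv := ht.div hnorm hne
      rw [hv]
      simpa [hw, Pi.div_def] using hdiv
    have hv1 := hvt p.1 ht1 hw1
    have hv2 := hvt p.2 ht2 hw2
    have hX : Tendsto (fun n => ‖(v n p.1 - w p.1) - (v n p.2 - w p.2)‖ ^ 2 / den p)
        atTop (nhds 0) := by
      have hnum : Tendsto (fun n => ‖(v n p.1 - w p.1) - (v n p.2 - w p.2)‖ ^ 2)
          atTop (nhds 0) := by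
        have hcomp : Tendsto (fun n => ‖(v n p.1 - w p.1) - (v n p.2 - w p.2)‖ ^ 2)
            atTop (nhds (‖(w p.1 - w p.1) - (w p.2 - w p.2)‖ ^ 2)) :=
          (((hv1.sub tendsto_const_nhds).sub
            (hv2.sub tendsto_const_nhds)).norm.pow 2)
        simpa using hcomp
      simpa using hnum.div_const (den p)
    simp only [hh]
    have hof := (ENNReal.continuous_ofReal.tendsto 0).comp hX
    simpa [Function.comp_def] using hof
  -- a.e. convergence of g to G
  have hgG : ∀ᵐ p ∂ρ, Tendsto (fun n => g n p) atTop (nhds (G p)) := by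
    filter_upwards [hfst.ae hae, hsnd.ae hae] with p ht1 ht2
    simp only [hg, hG]
    have h0 : Tendsto (fun n => ‖(u n p.1 - w p.1) - (u n p.2 - w p.2)‖ ^ 2)
        atTop (nhds 0) := by
      have hcomp : Tendsto (fun n => ‖(u n p.1 - w p.1) - (u n p.2 - w p.2)‖ ^ 2)
          atTop (nhds (‖(w p.1 - w p.1) - (w p.2 - w p.2)‖ ^ 2)) :=
        (((ht1.sub tendsto_const_nhds).sub
          (ht2.sub tendsto_const_nhds)).norm.pow 2)
      simpa using hcomp
    have hnum : Tendsto
        (fun n => c1 * (‖(u n p.1 - w p.1) - (u n p.2 - w p.2)‖ ^ 2 / den p))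
        atTop (nhds 0) := by
      have hc := (h0.div_const (den p)).const_mul c1
      simpa using hc
    have h1 : Tendsto
        (fun n => ENNReal.ofReal
          (c1 * (‖(u n p.1 - w p.1) - (u n p.2 - w p.2)‖ ^ 2 / den p)))
        atTop (nhds 0) := by
      have hof := (ENNReal.continuous_ofReal.tendsto 0).comp hnum
      simpa [Function.comp_def] using hof
    simpa using h1.add tendsto_const_nhds
  -- integral identities
  have hGeq2 : ∫⁻ p, G p ∂ρ = ENNReal.ofReal c2 * gagCircSq w := by
    rw [hgagEq w]
    simp only [hG]
    simp_rw [ENNReal.ofReal_mul hc2nn]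
    rw [lintegral_const_mul' _ _ ENNReal.ofReal_ne_top]
  have hGfin : ∫⁻ p, G p ∂ρ ≠ ⊤ := by
    rw [hGeq2]
    exact ENNReal.mul_ne_top ENNReal.ofReal_ne_top hwmem.2.ne
  have hgeq : ∀ n, ∫⁻ p, g n p ∂ρ
      = ENNReal.ofReal c1 * gagCircSq (fun θ => u n θ - w θ) + ∫⁻ p, G p ∂ρ := by
    intro n
    simp only [hg]
    rw [lintegral_add_right' _ hGm]
    congr 1
    rw [hgagEq (fun θ => u n θ - w θ)]
    simp_rw [ENNReal.ofReal_mul hc1nn]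
    rw [lintegral_const_mul' _ _ ENNReal.ofReal_ne_top]
  have hgi : Tendsto (fun n => ∫⁻ p, g n p ∂ρ) atTop (nhds (∫⁻ p, G p ∂ρ)) := by
    simp_rw [hgeq]
    have hmul : Tendsto (fun n => ENNReal.ofReal c1 * gagCircSq (fun θ => u n θ - w θ))
        atTop (nhds (ENNReal.ofReal c1 * 0)) :=
      ENNReal.Tendsto.const_mul hGag (Or.inr ENNReal.ofReal_ne_top)
    simpa using hmul.add (tendsto_const_nhds (x := ∫⁻ p, G p ∂ρ))
  have final := gdct hgm hhm hle hh0 hgG hGfin hgi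
  have hrw : (fun n => gagCircSq (fun θ => u n θ / ((‖u n θ‖ : ℝ) : ℂ) - w θ))
      = fun n => ∫⁻ p, h n p ∂ρ := by
    funext n
    rw [hgagEq]
  rw [hrw]
  exact final
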